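/- Let T and T' be two alternating trees on [n]. Then the intersection of their root cones 𝒞(T) and 𝒞(T') is full-dimensional, i.e., dim(𝒞(T) ∩ 𝒞(T')) = n − 1, if and only if T and T' are sign compatible. (Corollary 3.7.) -/

import Mathlib

open Finset

/-- The root `e_i - e_j ∈ ℝ^n` associated to the arc `a = (i, j)`. -/
def rootVec (n : ℕ) (a : Fin n × Fin n) : Fin n → ℝ :=
  fun k => (if k = a.1 then 1 else 0) - (if k = a.2 then 1 else 0)

/-- The underlying undirected (simple) graph of the directed graph on `[n]`
with arc set `E`. -/
def underlying (n : ℕ) (E : Finset (Fin n × Fin n)) : SimpleGraph (Fin n) where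
  Adj i j := i ≠ j ∧ ((i, j) ∈ E ∨ (j, i) ∈ E)
  symm := ⟨fun _ _ h => ⟨h.1.symm, h.2.symm⟩⟩
  loopless := ⟨fun _ h => h.1 rfl⟩

/-- A directed graph on `[n]` is alternating if every vertex is a source
(no incoming arcs) or a sink (no outgoing arcs). -/
def IsAlternating (n : ℕ) (E : Finset (Fin n × Fin n)) : Prop :=
  ∀ v : Fin n, (∀ a ∈ E, a.2 ≠ v) ∨ (∀ a ∈ E, a.1 ≠ v)

/-- An alternating tree on `[n]`: an alternating directed graph whose underlying
undirected graph is a tree. -/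
def IsAltTree (n : ℕ) (E : Finset (Fin n × Fin n)) : Prop :=
  IsAlternating n E ∧ (underlying n E).IsTree

/-- The root cone of a directed graph `G` on `[n]` with arc set `E`: all points
induced by nonnegative flows on the arcs, `Σ_{(i,j) ∈ E} f(i,j)(e_i - e_j)`. -/
def rootCone (n : ℕ) (E : Finset (Fin n × Fin n)) : Set (Fin n → ℝ) :=
  {x | ∃ f : Fin n × Fin n → ℝ, (∀ a, 0 ≤ f a) ∧ x = ∑ a ∈ E, f a • rootVec n a}

/-- The possible tree sign vector entries: `+`, `-`, or `?`. -/
inductive TreeSign : Type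
  | pos | neg | unk
  deriving DecidableEq

/-- The tree sign vector entry `σ_I(T)` for the directed graph with arc set `E`:
`+` if no arc enters `I`, `-` if no arc leaves `I`, and `?` otherwise. -/
def treeSign (n : ℕ) (E : Finset (Fin n × Fin n)) (I : Finset (Fin n)) :
    TreeSign :=
  if ∀ a ∈ E, a.2 ∈ I → a.1 ∈ I then TreeSign.pos
  else if ∀ a ∈ E, a.1 ∈ I → a.2 ∈ I then TreeSign.neg
  else TreeSign.unk

/-- Two alternating trees on `[n]` (given by arc sets `E`, `E'`) are sign compatible
if there is no nonempty `I ⊆ [n-1]` on which their tree sign vectors take the two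
opposite definite values `+` and `-`. -/
def SignCompatible (n : ℕ) (E E' : Finset (Fin n × Fin n)) : Prop :=
  ¬ ∃ I : Finset (Fin n), I.Nonempty ∧ (∀ i ∈ I, (i : ℕ) + 1 < n) ∧
    ((treeSign n E I = TreeSign.pos ∧ treeSign n E' I = TreeSign.neg) ∨
     (treeSign n E I = TreeSign.neg ∧ treeSign n E' I = TreeSign.pos))

/-!
Both root cones lie in the hyperplane `V = {Σ xᵢ = 0}`, and the roots of a connected graph
span `V`. If `σ_I(T) = +` and `σ_I(T') = -`, the functional `Σ_{i ∈ I} xᵢ` is `≥ 0` on `𝒞(T)`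
and `≤ 0` on `𝒞(T')`, so the intersection lies in a proper subspace of `V`.

Conversely, if the relative interiors of the two cones meet, a common interior point can be
moved a little in every direction of `V` without leaving either cone, so the intersection
spans `V`. If they do not meet, a separating hyperplane yields a non-constant potential
`y : [n] → ℝ` that weakly increases along the arcs of `T` and weakly decreases along those of
`T'`; a superlevel (or sublevel) set of `y` cut at the value of the vertex `n` is then a set
`I ⊆ [n-1]` on which `T` and `T'` have opposite signs.
-/

open Filter Topology

section LinearAlgebra

variable {n : ℕ}

lemma rootVec_eq (a : Fin n × Fin n) :
    rootVec n a = Pi.single a.1 1 - Pi.single a.2 1 := by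
  ext k
  simp [rootVec, Pi.single_apply]

lemma map_rootVec {F : Type*} [FunLike F (Fin n → ℝ) ℝ] [LinearMapClass F ℝ (Fin n → ℝ) ℝ]
    (φ : F) (a : Fin n × Fin n) :
    φ (rootVec n a) = φ (Pi.single a.1 1) - φ (Pi.single a.2 1) := by
  rw [rootVec_eq, map_sub]

variable (n) in
noncomputable def coordSum (I : Finset (Fin n)) : (Fin n → ℝ) →ₗ[ℝ] ℝ :=
  ∑ i ∈ I, LinearMap.proj i

@[simp]
lemma coordSum_apply (I : Finset (Fin n)) (x : Fin n → ℝ) :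
    coordSum n I x = ∑ i ∈ I, x i := by
  simp [coordSum]

lemma coordSum_rootVec (I : Finset (Fin n)) (a : Fin n × Fin n) :
    coordSum n I (rootVec n a) = (if a.1 ∈ I then 1 else 0) - (if a.2 ∈ I then 1 else 0) := by
  simp [map_rootVec, Pi.single_apply]

variable (n) in
noncomputable def sumZero : Submodule ℝ (Fin n → ℝ) :=
  LinearMap.ker (coordSum n univ)

lemma finrank_sumZero : Module.finrank ℝ (sumZero n) = n - 1 := by
  rcases Nat.eq_zero_or_pos n with rfl | hn
  · exact Module.finrank_zero_of_subsingleton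
  · have hne : coordSum n univ ≠ 0 := fun h => by
      simpa using LinearMap.congr_fun h (Pi.single ⟨0, hn⟩ 1)
    have := Module.Dual.finrank_ker_add_one_of_ne_zero hne
    simp only [Module.finrank_fintype_fun_eq_card, Fintype.card_fin] at this
    rw [sumZero]
    omega

lemma rootVec_mem_sumZero (a : Fin n × Fin n) : rootVec n a ∈ sumZero n := by
  rw [sumZero, LinearMap.mem_ker, coordSum_rootVec]
  simp

variable (n) in
noncomputable def rootMap (E : Finset (Fin n × Fin n)) :
    (Fin n × Fin n → ℝ) →ₗ[ℝ] (Fin n → ℝ) :=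
  ∑ a ∈ E, (LinearMap.proj a).smulRight (rootVec n a)

@[simp]
lemma rootMap_apply (E : Finset (Fin n × Fin n)) (g : Fin n × Fin n → ℝ) :
    rootMap n E g = ∑ a ∈ E, g a • rootVec n a := by
  simp [rootMap]

lemma rootMap_single {E : Finset (Fin n × Fin n)} {a : Fin n × Fin n} (ha : a ∈ E) :
    rootMap n E (Pi.single a 1) = rootVec n a := by
  rw [rootMap_apply, sum_eq_single a (fun b _ hb => by simp [hb]) (absurd ha)]
  simp

lemma range_rootMap_le (E : Finset (Fin n × Fin n)) :
    LinearMap.range (rootMap n E) ≤ sumZero n := by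
  rintro _ ⟨g, rfl⟩
  rw [rootMap_apply]
  exact Submodule.sum_mem _ fun a _ => Submodule.smul_mem _ _ (rootVec_mem_sumZero a)

end LinearAlgebra

section RootCone

variable {n : ℕ} {E E' : Finset (Fin n × Fin n)}

lemma mem_rootCone_iff {x : Fin n → ℝ} :
    x ∈ rootCone n E ↔ ∃ g : Fin n × Fin n → ℝ, (∀ a, 0 ≤ g a) ∧ rootMap n E g = x := by
  simp only [rootCone, Set.mem_ofPred_eq, rootMap_apply, eq_comm]

lemma rootCone_subset_sumZero : rootCone n E ⊆ sumZero n := by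
  intro x hx
  obtain ⟨g, -, rfl⟩ := mem_rootCone_iff.1 hx
  exact range_rootMap_le E ⟨g, rfl⟩

lemma span_inter_le_sumZero :
    Submodule.span ℝ (rootCone n E ∩ rootCone n E') ≤ sumZero n :=
  Submodule.span_le.2 (Set.inter_subset_left.trans rootCone_subset_sumZero)

lemma map_nonneg_of_mem_rootCone {F : Type*} [FunLike F (Fin n → ℝ) ℝ]
    [LinearMapClass F ℝ (Fin n → ℝ) ℝ] (φ : F) (hφ : ∀ a ∈ E, 0 ≤ φ (rootVec n a))
    {x : Fin n → ℝ} (hx : x ∈ rootCone n E) : 0 ≤ φ x := by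
  obtain ⟨g, hg, rfl⟩ := mem_rootCone_iff.1 hx
  rw [rootMap_apply, map_sum]
  exact sum_nonneg fun a ha => by
    rw [map_smul, smul_eq_mul]
    exact mul_nonneg (hg a) (hφ a ha)

lemma rootVec_mem_range_rootMap_of_reachable {i j : Fin n}
    (h : (underlying n E).Reachable i j) : rootVec n (i, j) ∈ LinearMap.range (rootMap n E) := by
  obtain ⟨w⟩ := h
  induction w with
  | nil => simp [rootVec_eq]
  | @cons u v w huv _ ih =>
    have hstep : rootVec n (u, v) ∈ LinearMap.range (rootMap n E) := by
      rcases huv.2 with huv | hvu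
      · exact ⟨_, rootMap_single huv⟩
      · refine ⟨-Pi.single (v, u) 1, ?_⟩
        rw [map_neg, rootMap_single hvu, rootVec_eq, rootVec_eq, neg_sub]
    have hsplit : rootVec n (u, w) = rootVec n (u, v) + rootVec n (v, w) := by
      simp only [rootVec_eq]
      abel
    rw [hsplit]
    exact add_mem hstep ih

lemma range_rootMap (hE : (underlying n E).Connected) :
    LinearMap.range (rootMap n E) = sumZero n := by
  refine le_antisymm (range_rootMap_le E) fun v hv => ?_
  obtain ⟨z⟩ := hE.nonempty
  have hv : ∑ k, v k = 0 := by simpa [sumZero] using hv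
  have hdecomp : v = ∑ k, v k • rootVec n (k, z) := by
    ext m
    simp [rootVec_eq, Pi.single_apply, mul_sub, sum_sub_distrib, hv]
  rw [hdecomp]
  exact Submodule.sum_mem _ fun k _ =>
    Submodule.smul_mem _ _ (rootVec_mem_range_rootMap_of_reachable (hE.preconnected k z))

end RootCone

section TreeSign

variable {n : ℕ} {E E' : Finset (Fin n × Fin n)} {I : Finset (Fin n)}

def OppositeSigns (n : ℕ) (E E' : Finset (Fin n × Fin n)) (I : Finset (Fin n)) : Prop :=
  (treeSign n E I = TreeSign.pos ∧ treeSign n E' I = TreeSign.neg) ∨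
    (treeSign n E I = TreeSign.neg ∧ treeSign n E' I = TreeSign.pos)

lemma OppositeSigns.symm (h : OppositeSigns n E E' I) : OppositeSigns n E' E I :=
  (Or.symm h).imp And.symm And.symm

lemma treeSign_eq_pos_iff : treeSign n E I = TreeSign.pos ↔ ∀ a ∈ E, a.2 ∈ I → a.1 ∈ I := by
  unfold treeSign
  split_ifs with h1 <;> first | exact iff_of_true rfl h1 | exact iff_of_false (by simp) h1

lemma treeSign_eq_neg_iff : treeSign n E I = TreeSign.neg ↔
    (∃ a ∈ E, a.2 ∈ I ∧ a.1 ∉ I) ∧ ∀ a ∈ E, a.1 ∈ I → a.2 ∈ I := by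
  unfold treeSign
  have hin : (∃ a ∈ E, a.2 ∈ I ∧ a.1 ∉ I) ↔ ¬ ∀ a ∈ E, a.2 ∈ I → a.1 ∈ I := by
    push Not; rfl
  rw [hin]
  split_ifs with h1 h2
  · exact iff_of_false (by simp) (fun h => h.1 h1)
  · exact iff_of_true rfl ⟨h1, h2⟩
  · exact iff_of_false (by simp) (fun h => h2 h.2)

lemma treeSign_eq_neg_of_preconnected (hE : (underlying n E).Preconnected) {i j : Fin n}
    (hi : i ∈ I) (hj : j ∉ I) (hout : ∀ a ∈ E, a.1 ∈ I → a.2 ∈ I) :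
    treeSign n E I = TreeSign.neg := by
  refine treeSign_eq_neg_iff.2 ⟨?_, hout⟩
  obtain ⟨w⟩ := hE i j
  obtain ⟨d, -, hd₁, hd₂⟩ := w.exists_boundary_dart (I : Set (Fin n)) hi hj
  rcases d.adj.2 with hd | hd
  · exact absurd (hout _ hd hd₁) hd₂
  · exact ⟨_, hd, hd₁, hd₂⟩

lemma coordSum_nonneg_of_treeSign_eq_pos (h : treeSign n E I = TreeSign.pos)
    {x : Fin n → ℝ} (hx : x ∈ rootCone n E) : 0 ≤ coordSum n I x := by
  refine map_nonneg_of_mem_rootCone _ (fun a ha => ?_) hx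
  rw [coordSum_rootVec]
  have := treeSign_eq_pos_iff.1 h a ha
  split_ifs <;> simp_all

lemma coordSum_nonpos_of_treeSign_eq_neg (h : treeSign n E I = TreeSign.neg)
    {x : Fin n → ℝ} (hx : x ∈ rootCone n E) : coordSum n I x ≤ 0 := by
  refine neg_nonneg.1 (map_nonneg_of_mem_rootCone (-coordSum n I) (fun a ha => ?_) hx)
  rw [LinearMap.neg_apply, coordSum_rootVec]
  have := (treeSign_eq_neg_iff.1 h).2 a ha
  split_ifs <;> simp_all

lemma span_inter_le_ker_of_oppositeSigns (h : OppositeSigns n E E' I) :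
    Submodule.span ℝ (rootCone n E ∩ rootCone n E') ≤ LinearMap.ker (coordSum n I) := by
  rw [Submodule.span_le]
  rintro x ⟨hx, hx'⟩
  rcases h with ⟨hpos, hneg⟩ | ⟨hneg, hpos⟩
  · exact le_antisymm (coordSum_nonpos_of_treeSign_eq_neg hneg hx')
      (coordSum_nonneg_of_treeSign_eq_pos hpos hx)
  · exact le_antisymm (coordSum_nonpos_of_treeSign_eq_neg hneg hx)
      (coordSum_nonneg_of_treeSign_eq_pos hpos hx')

lemma oppositeSigns_of_potential (hE : (underlying n E).Preconnected) {y : Fin n → ℝ}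
    (hy : ∀ a ∈ E, y a.1 ≤ y a.2) (hy' : ∀ a ∈ E', y a.2 ≤ y a.1) {c : ℝ} {i j : Fin n}
    (hi : c < y i) (hj : y j ≤ c) : OppositeSigns n E E' {k | c < y k} := by
  refine Or.inr ⟨treeSign_eq_neg_of_preconnected hE (i := i) (j := j) ?_ ?_ ?_, ?_⟩
  · simpa using hi
  · simpa using hj
  · intro a ha h1
    simp only [mem_filter, mem_univ, true_and] at h1 ⊢
    exact h1.trans_le (hy a ha)
  · refine treeSign_eq_pos_iff.2 fun a ha h2 => ?_
    simp only [mem_filter, mem_univ, true_and] at h2 ⊢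
    exact h2.trans_le (hy' a ha)

lemma not_signCompatible_of_potential (hE : (underlying n E).Preconnected)
    (hE' : (underlying n E').Preconnected) {y : Fin n → ℝ}
    (hy : ∀ a ∈ E, y a.1 ≤ y a.2) (hy' : ∀ a ∈ E', y a.2 ≤ y a.1)
    (hyc : ∃ i j, y i ≠ y j) : ¬ SignCompatible n E E' := by
  have hn : 0 < n := by
    obtain ⟨i, -⟩ := hyc
    exact i.pos
  set z : Fin n := ⟨n - 1, by omega⟩
  obtain ⟨k, hk⟩ : ∃ k, y k ≠ y z := by
    by_contra! hconst
    obtain ⟨i, j, hij⟩ := hyc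
    exact hij ((hconst i).trans (hconst j).symm)
  have below_top : ∀ I : Finset (Fin n), z ∉ I → ∀ i ∈ I, (i : ℕ) + 1 < n := by
    intro I hz i hi
    have : (i : ℕ) ≠ n - 1 := fun h => hz (Fin.ext (a := i) (b := z) h ▸ hi)
    omega
  rcases hk.lt_or_gt with hlt | hgt
  · refine fun h => h ⟨({k | -y z < -y k} : Finset (Fin n)), ⟨k, by simpa using hlt⟩,
      below_top _ (by simp),
      (oppositeSigns_of_potential (y := fun k => -y k) hE' ?_ ?_ (neg_lt_neg hlt) le_rfl).symm⟩
    · exact fun a ha => neg_le_neg (hy' a ha)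
    · exact fun a ha => neg_le_neg (hy a ha)
  · exact fun h => h ⟨({k | y z < y k} : Finset (Fin n)), ⟨k, by simpa using hgt⟩,
      below_top _ (by simp), oppositeSigns_of_potential hE hy hy' hgt le_rfl⟩

end TreeSign

lemma map_le_zero_of_forall_add_smul_mem {M F : Type*} [AddCommGroup M] [Module ℝ M]
    [FunLike F M ℝ] [LinearMapClass F ℝ M ℝ] (φ : F) {s : Set M} {u : ℝ}
    (hφ : ∀ y ∈ s, φ y ≤ u) {x v : M} (hx : x ∈ s) (hv : ∀ t : ℝ, 0 ≤ t → x + t • v ∈ s) :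
    φ v ≤ 0 := by
  by_contra! hpos
  have hle := hφ _ (hv ((u - φ x + 1) / φ v) (div_nonneg (by linarith [hφ x hx]) hpos.le))
  rw [map_add, map_smul, smul_eq_mul, div_mul_cancel₀ _ hpos.ne'] at hle
  linarith

lemma mem_span_of_add_smul_mem {K M : Type*} [DivisionRing K] [AddCommGroup M] [Module K M]
    {s : Set M} {x v : M} {ε : K} (hε : ε ≠ 0) (hx : x ∈ s) (hxv : x + ε • v ∈ s) :
    v ∈ Submodule.span K s := by
  have hv : v = ε⁻¹ • ((x + ε • v) - x) := by
    rw [add_sub_cancel_left, smul_smul, inv_mul_cancel₀ hε, one_smul]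
  rw [hv]
  exact Submodule.smul_mem _ _
    (Submodule.sub_mem _ (Submodule.subset_span hxv) (Submodule.subset_span hx))

lemma eventually_forall_pos_add_mul {ι : Type*} [Finite ι] {g : ι → ℝ} (hg : ∀ i, 0 < g i)
    (h : ι → ℝ) : ∀ᶠ ε in 𝓝 (0 : ℝ), ∀ i, 0 < g i + ε * h i := by
  refine eventually_all.2 fun i => ?_
  have hlim : Tendsto (fun ε : ℝ => g i + ε * h i) (𝓝 0) (𝓝 (g i)) :=
    Continuous.tendsto' (by fun_prop) 0 (g i) (by simp)
  exact hlim.eventually (lt_mem_nhds (hg i))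

section OpenCone

variable {n : ℕ} {E : Finset (Fin n × Fin n)}

variable (n) in
noncomputable def liftMap (E : Finset (Fin n × Fin n)) :
    (Fin n × Fin n → ℝ) × ℝ →ₗ[ℝ] (Fin n → ℝ) :=
  (rootMap n E).coprod (LinearMap.toSpanSingleton ℝ _ 1)

@[simp]
lemma liftMap_apply (g : Fin n × Fin n → ℝ) (t : ℝ) :
    liftMap n E (g, t) = rootMap n E g + t • 1 := rfl

variable (n) in
/-- The relative interior of `rootCone n E` in `sumZero n`, thickened by the line `ℝ • 1` so
that it is open in `ℝⁿ` when `E` is connected. -/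
def openCone (E : Finset (Fin n × Fin n)) : Set (Fin n → ℝ) :=
  liftMap n E '' (Set.univ.pi (fun _ => Set.Ioi 0) ×ˢ Set.univ)

lemma liftMap_mem_openCone {g : Fin n × Fin n → ℝ} (hg : ∀ a, 0 < g a) (t : ℝ) :
    liftMap n E (g, t) ∈ openCone n E :=
  ⟨(g, t), ⟨fun a _ => hg a, trivial⟩, rfl⟩

lemma convex_openCone : Convex ℝ (openCone n E) :=
  ((convex_pi fun _ _ => convex_Ioi 0).prod convex_univ).linear_image _

lemma liftMap_surjective (hE : (underlying n E).Connected) :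
    Function.Surjective (liftMap n E) := by
  obtain ⟨z⟩ := hE.nonempty
  rw [← LinearMap.range_eq_top, liftMap, LinearMap.range_coprod, range_rootMap hE,
    LinearMap.range_toSpanSingleton, sup_comm]
  exact LinearMap.span_singleton_sup_ker_eq_top _ (by simpa using z.pos.ne')

lemma isOpen_openCone (hE : (underlying n E).Connected) : IsOpen (openCone n E) :=
  (liftMap n E).isOpenMap_of_finiteDimensional (liftMap_surjective hE) _
    ((isOpen_set_pi Set.finite_univ fun _ _ => isOpen_Ioi).prod isOpen_univ)

lemma add_smul_rootVec_mem_openCone {x : Fin n → ℝ} (hx : x ∈ openCone n E)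
    {a : Fin n × Fin n} (ha : a ∈ E) {t : ℝ} (ht : 0 ≤ t) :
    x + t • rootVec n a ∈ openCone n E := by
  obtain ⟨⟨g, s⟩, ⟨hg, -⟩, rfl⟩ := hx
  have hpos : ∀ b, 0 < (g + t • Pi.single a 1 : Fin n × Fin n → ℝ) b := fun b => by
    have := hg b trivial
    simp only [Pi.add_apply, Pi.smul_apply, smul_eq_mul, Pi.single_apply]
    split_ifs <;> simp_all [add_pos_of_pos_of_nonneg]
  convert liftMap_mem_openCone hpos s using 1
  simp only [liftMap_apply, map_add, map_smul, rootMap_single ha]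
  abel

end OpenCone

section Separation

variable {n : ℕ} {E E' : Finset (Fin n × Fin n)}

lemma exists_potential_of_disjoint (hE : (underlying n E).Connected)
    (hdisj : Disjoint (openCone n E) (openCone n E')) :
    ∃ y : Fin n → ℝ, (∀ a ∈ E, y a.1 ≤ y a.2) ∧ (∀ a ∈ E', y a.2 ≤ y a.1) ∧
      ∃ i j, y i ≠ y j := by
  obtain ⟨φ, u, hφ, hφ'⟩ :=
    geometric_hahn_banach_open convex_openCone (isOpen_openCone hE) convex_openCone hdisj
  have h₀ : liftMap n E (1, 0) ∈ openCone n E := liftMap_mem_openCone (fun _ => one_pos) 0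
  have h₀' : liftMap n E' (1, 0) ∈ openCone n E' := liftMap_mem_openCone (fun _ => one_pos) 0
  refine ⟨fun k => φ (Pi.single k 1), fun a ha => ?_, fun a ha => ?_, ?_⟩
  · have := map_le_zero_of_forall_add_smul_mem φ (fun y hy => (hφ y hy).le) h₀
      fun _ ht => add_smul_rootVec_mem_openCone h₀ ha ht
    rw [map_rootVec] at this
    linarith
  · have := map_le_zero_of_forall_add_smul_mem (-φ) (u := -u) (fun y hy => neg_le_neg (hφ' y hy))
      h₀' fun _ ht => add_smul_rootVec_mem_openCone h₀' ha ht
    rw [map_rootVec] at this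
    simp only [neg_apply] at this
    linarith
  · by_contra! hconst
    have hroot : ∀ a, φ (rootVec n a) = 0 := fun a => by
      rw [map_rootVec, hconst a.1 a.2, sub_self]
    have hzero : ∀ F g, φ (liftMap n F (g, 0)) = 0 := fun F g => by
      simp only [liftMap_apply, zero_smul, add_zero, rootMap_apply, map_sum, map_smul, hroot,
        smul_zero, sum_const_zero]
    linarith [hφ _ h₀, hφ' _ h₀', hzero E 1, hzero E' 1]

lemma span_inter_eq_sumZero_of_mem_openCone (hE : (underlying n E).Connected)
    (hE' : (underlying n E').Connected) {x : Fin n → ℝ} (hx : x ∈ openCone n E)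
    (hx' : x ∈ openCone n E') :
    Submodule.span ℝ (rootCone n E ∩ rootCone n E') = sumZero n := by
  obtain ⟨⟨g, t⟩, ⟨hg, -⟩, rfl⟩ := hx
  obtain ⟨⟨g', t'⟩, ⟨hg', -⟩, hgg'⟩ := hx'
  have hsum : ∀ (F : Finset (Fin n × Fin n)) (f : Fin n × Fin n → ℝ) (s : ℝ),
      coordSum n univ (liftMap n F (f, s)) = s * n := fun F f s => by
    have : coordSum n univ (rootMap n F f) = 0 := range_rootMap_le F ⟨f, rfl⟩
    rw [liftMap_apply, map_add, this, map_smul, coordSum_apply]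
    simp
  have ht : t' = t := by
    have := congrArg (coordSum n univ) hgg'
    rw [hsum, hsum] at this
    obtain ⟨z⟩ := hE.nonempty
    exact mul_right_cancel₀ (Nat.cast_ne_zero.2 z.pos.ne') this
  have hx₀ : rootMap n E' g' = rootMap n E g := by
    simpa [ht] using hgg'
  refine le_antisymm span_inter_le_sumZero fun v hv => ?_
  obtain ⟨h, hh⟩ : v ∈ LinearMap.range (rootMap n E) := (range_rootMap hE).ge hv
  obtain ⟨h', hh'⟩ : v ∈ LinearMap.range (rootMap n E') := (range_rootMap hE').ge hv
  obtain ⟨ε, ⟨hεE, hεE'⟩, hε⟩ :=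
    (((eventually_forall_pos_add_mul (fun a => hg a trivial) h).and
      (eventually_forall_pos_add_mul (fun a => hg' a trivial) h')).filter_mono
      nhdsWithin_le_nhds |>.and self_mem_nhdsWithin).exists (f := 𝓝[>] (0 : ℝ))
  refine mem_span_of_add_smul_mem (x := rootMap n E g) (ne_of_gt hε) ⟨?_, ?_⟩ ⟨?_, ?_⟩
  · exact mem_rootCone_iff.2 ⟨g, fun a => (hg a trivial).le, rfl⟩
  · exact mem_rootCone_iff.2 ⟨g', fun a => (hg' a trivial).le, hx₀⟩
  · refine mem_rootCone_iff.2 ⟨g + ε • h, fun a => (hεE a).le, ?_⟩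
    rw [map_add, map_smul, hh]
  · refine mem_rootCone_iff.2 ⟨g' + ε • h', fun a => (hεE' a).le, ?_⟩
    rw [map_add, map_smul, hh', hx₀]

end Separation

section FullDimension

variable {n : ℕ} {E E' : Finset (Fin n × Fin n)}

lemma signCompatible_of_finrank_span_inter
    (h : Module.finrank ℝ (Submodule.span ℝ (rootCone n E ∩ rootCone n E')) = n - 1) :
    SignCompatible n E E' := by
  rintro ⟨I, ⟨i, hi⟩, hI, hopp⟩
  set z : Fin n := ⟨n - 1, by have := i.pos; omega⟩
  have hz : z ∉ I := fun hz => by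
    have := hI z hz
    simp only [z] at this
    omega
  have hspan := Submodule.eq_of_le_of_finrank_eq span_inter_le_sumZero
    (h.trans finrank_sumZero.symm)
  have hker := span_inter_le_ker_of_oppositeSigns hopp (hspan.ge (rootVec_mem_sumZero (i, z)))
  rw [LinearMap.mem_ker, coordSum_rootVec, if_pos hi, if_neg hz] at hker
  norm_num at hker

lemma finrank_span_inter_of_signCompatible (hE : (underlying n E).Connected)
    (hE' : (underlying n E').Connected) (h : SignCompatible n E E') :
    Module.finrank ℝ (Submodule.span ℝ (rootCone n E ∩ rootCone n E')) = n - 1 := by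
  obtain ⟨x, hx, hx'⟩ : (openCone n E ∩ openCone n E').Nonempty := by
    by_contra hdisj
    rw [Set.not_nonempty_iff_eq_empty, ← Set.disjoint_iff_inter_eq_empty] at hdisj
    obtain ⟨y, hy, hy', hyc⟩ := exists_potential_of_disjoint hE hdisj
    exact not_signCompatible_of_potential hE.preconnected hE'.preconnected hy hy' hyc h
  rw [span_inter_eq_sumZero_of_mem_openCone hE hE' hx hx', finrank_sumZero]

end FullDimension

/-- Corollary 3.7. Two alternating trees `T, T'` on `[n]` have
full-dimensional intersection of root cones, `dim(𝒞(T) ∩ 𝒞(T')) = n - 1`, if and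
only if they are sign compatible. -/
theorem full_dim_iff_signCompatible (n : ℕ) (E E' : Finset (Fin n × Fin n))
    (hT : IsAltTree n E) (hT' : IsAltTree n E') :
    Module.finrank ℝ (Submodule.span ℝ (rootCone n E ∩ rootCone n E')) = n - 1 ↔
      SignCompatible n E E' :=
  ⟨signCompatible_of_finrank_span_inter,
    finrank_span_inter_of_signCompatible hT.2.connected hT'.2.connected⟩
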